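/- arXiv:1802.04183 — 5 statements merged into one kernel-verified Lean document; each statement's English description precedes it below -/
import Mathlib

section
/- Let G be a K-IC structure with inner vertex set V_I satisfying condition c1 (a_{i,j} is odd for every inner vertex i and every j ∈ V_NI(i) \ N^+_{T_i}(i)) and condition c2 (b_{i,j} = 0 for every inner vertex i and every j ∈ V(G) \ V(T_i)). Then for every inner vertex i, the combination Z_i = W_I ⊕ (⊕_{j ∈ V_NI(i)} W_j) of Construction-1 index code symbols over a field of characteristic 2 equals x_i ⊕ (⊕_{j ∈ S} x_j) for some subset S ⊆ N^+_{T_i}(i); in particular x_i is decodable by the user requesting it. (Theorem 1, sufficiency) -/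
namespace ICPaper

variable {V : Type*}

/-- A directed cycle: a nonempty list of distinct vertices, consecutive vertices joined by
edges, and an edge from the last vertex back to the first (positive length). -/
def IsCycle (E : V → V → Prop) (l : List V) : Prop :=
  l ≠ [] ∧ l.Nodup ∧ l.Chain' E ∧
    ∃ a b, l.getLast? = some a ∧ l.head? = some b ∧ E a b

/-- A directed path from `a` to `b`: consecutive vertices joined by edges, distinct vertices. -/
def IsPathList (E : V → V → Prop) (a b : V) (l : List V) : Prop :=
  l.Chain' E ∧ l.head? = some a ∧ l.getLast? = some b ∧ l.Nodup

/-- An I-path: a directed path from an inner vertex `a` to a different inner vertex `b`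
all of whose intermediate vertices are non-inner. -/
def IsIPath (E : V → V → Prop) (VI : Set V) (a b : V) (l : List V) : Prop :=
  a ∈ VI ∧ b ∈ VI ∧ a ≠ b ∧ IsPathList E a b l ∧
    ∀ v ∈ l, v ≠ a → v ≠ b → v ∉ VI

/-- `G = (V, E)` is a `K`-IC structure with inner vertex set `VI`:
(0) `|VI| = K`; (1) no cycle contains exactly one inner vertex (no I-cycle);
(2) between any ordered pair of distinct inner vertices there is exactly one I-path;
(3) every vertex and every edge lies on one of these I-paths. -/
def IsICStructure (E : V → V → Prop) (VI : Set V) (K : ℕ) : Prop :=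
  VI.ncard = K ∧
  (¬ ∃ l, IsCycle E l ∧ (∃! v, v ∈ l ∧ v ∈ VI)) ∧
  (∀ a ∈ VI, ∀ b ∈ VI, a ≠ b → ∃! l, IsIPath E VI a b l) ∧
  (∀ v : V, ∃ a b l, IsIPath E VI a b l ∧ v ∈ l) ∧
  (∀ u w : V, E u w → ∃ a b l, IsIPath E VI a b l ∧ [u, w] <:+: l)

/-- Vertex set of the rooted tree `T i`: the union of the I-paths starting at `i`. -/
def treeVerts (E : V → V → Prop) (VI : Set V) (i : V) : Set V :=
  {v | ∃ b l, IsIPath E VI i b l ∧ v ∈ l}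

/-- `(u, w)` is an edge of the rooted tree `T i`. -/
def treeEdge (E : V → V → Prop) (VI : Set V) (i u w : V) : Prop :=
  ∃ b l, IsIPath E VI i b l ∧ [u, w] <:+: l

/-- `V_NI(i)`: the non-inner vertices of the rooted tree `T i`. -/
def VNI (E : V → V → Prop) (VI : Set V) (i : V) : Set V :=
  treeVerts E VI i \ VI

/-- `N^+_{T i}(i)`: the out-neighbourhood of `i` in the rooted tree `T i`. -/
def NplusT (E : V → V → Prop) (VI : Set V) (i : V) : Set V :=
  {w | treeEdge E VI i i w}

/-- `N^+_G(v)`: the out-neighbourhood of `v` in `G`. -/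
def NplusG (E : V → V → Prop) (v : V) : Set V := {w | E v w}

/-- The quantity `|{v ∈ V_NI(i) : j ∈ N^+_G(v)}|`; this is `a_{i,j}` when
`j ∈ V_NI(i) \ N^+_{T i}(i)` and `b_{i,j}` when `j ∉ V(T i)`. -/
noncomputable def coeffCount (E : V → V → Prop) (VI : Set V) (i j : V) : ℕ :=
  {v | v ∈ VNI E VI i ∧ E v j}.ncard

/-- Condition c1: `a_{i,j}` is odd for every inner vertex `i` and every
`j ∈ V_NI(i) \ N^+_{T i}(i)`. -/
def CondC1 (E : V → V → Prop) (VI : Set V) : Prop :=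
  ∀ i ∈ VI, ∀ j ∈ VNI E VI i, j ∉ NplusT E VI i → Odd (coeffCount E VI i j)

/-- Condition c2: `b_{i,j} = 0` for every inner vertex `i` and every `j ∉ V(T i)`. -/
def CondC2 (E : V → V → Prop) (VI : Set V) : Prop :=
  ∀ i ∈ VI, ∀ j, j ∉ treeVerts E VI i → coeffCount E VI i j = 0

/-- Construction 1, symbol `W_I = ⊕_{k ∈ V_I} x_k`. -/
noncomputable def WI {F : Type*} [AddCommMonoid F] (VI : Set V) (x : V → F) : F :=
  ∑ᶠ k ∈ VI, x k

/-- Construction 1, symbol `W_j = x_j ⊕ (⊕_{q ∈ N^+_G(j)} x_q)`. -/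
noncomputable def Wsym {F : Type*} [AddCommMonoid F] (E : V → V → Prop) (x : V → F)
    (j : V) : F :=
  x j + ∑ᶠ q ∈ NplusG E j, x q

/-- Algorithm 1, the combination `Z_i = W_I ⊕ (⊕_{j ∈ V_NI(i)} W_j)`. -/
noncomputable def Z {F : Type*} [AddCommMonoid F] (E : V → V → Prop) (VI : Set V)
    (x : V → F) (i : V) : F :=
  WI VI x + ∑ᶠ j ∈ VNI E VI i, Wsym E x j

end ICPaper

open ICPaper

/-!
In characteristic 2, `Z_i = ∑ c_v x_v` depends only on the parities of the multiplicities
`c_v = [v ∈ V_I] + [v ∈ V_NI(i)] + |{u ∈ V_NI(i) : u → v}|`. The root has `c_i = 1`, since an edge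
from `V_NI(i)` back to `i` would close an I-cycle. An inner `v ≠ i` not adjacent to `i` in `T_i`
has `c_v = 1 + 1`: each in-neighbour of `v` in `V_NI(i)` is the penultimate vertex of an I-path
from `i` to `v`, and there is only one. A vertex of `V_NI(i) \ N^+_{T_i}(i)` has `c_v = 1 + a_{i,v}`,
even by c1, and a vertex outside `T_i` has `c_v = b_{i,v} = 0` by c2.
-/

namespace ICPaper

variable {V : Type*}

section Sums

variable {F : Type*} [Fintype V]

lemma finsum_mem_eq_sum_indicator_nsmul [AddCommMonoid F] (s : Set V) (x : V → F) :
    ∑ᶠ v ∈ s, x v = ∑ v, s.indicator (1 : V → ℕ) v • x v := by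
  rw [finsum_mem_def, finsum_eq_sum_of_fintype]
  refine Finset.sum_congr rfl fun v _ => ?_
  by_cases hv : v ∈ s <;> simp [hv]

lemma finsum_mem_finsum_mem_eq_sum_ncard_nsmul [AddCommMonoid F] (s : Set V)
    (R : V → V → Prop) (x : V → F) :
    ∑ᶠ j ∈ s, ∑ᶠ q ∈ {q | R j q}, x q = ∑ q, {j | j ∈ s ∧ R j q}.ncard • x q := by
  classical
  simp_rw [finsum_mem_eq_toFinset_sum]
  rw [Finset.sum_comm' (t' := Finset.univ) (s' := fun q => {j | j ∈ s ∧ R j q}.toFinset)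
    (by simp)]
  simp [Set.ncard_eq_toFinset_card']

lemma nsmul_eq_ite_even [Semiring F] [CharP F 2] (n : ℕ) (y : F) :
    n • y = if Even n then 0 else y := by
  rw [nsmul_eq_mul, CharTwo.natCast_eq_ite]
  split_ifs <;> simp

lemma sum_nsmul_eq_add_finsum_mem_odd [Semiring F] [CharP F 2] {c : V → ℕ} {T : Set V} {i : V}
    (hci : Odd (c i)) (hiT : i ∉ T) (hT : ∀ v ≠ i, Odd (c v) → v ∈ T) (x : V → F) :
    ∑ v, c v • x v = x i + ∑ᶠ v ∈ {v | v ∈ T ∧ Odd (c v)}, x v := by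
  have hodd : {v | Odd (c v)} = insert i {v | v ∈ T ∧ Odd (c v)} := by
    ext v
    by_cases hvi : v = i
    · simp [hvi, hci]
    · simpa [hvi] using hT v hvi
  calc ∑ v, c v • x v = ∑ᶠ v ∈ {v | Odd (c v)}, x v := by
        rw [finsum_mem_def, finsum_eq_sum_of_fintype]
        refine Finset.sum_congr rfl fun v _ => ?_
        rw [nsmul_eq_ite_even]
        by_cases h : Even (c v)
        · simp [h, Nat.not_odd_iff_even.2 h]
        · simp [h, Nat.not_even_iff_odd.1 h]
    _ = _ := by rw [hodd, finsum_mem_insert _ (fun h => hiT h.1) (Set.toFinite _)]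

end Sums

variable {E : V → V → Prop} {VI : Set V}

lemma IsPathList.concat {a u v : V} {p : List V} (hp : IsPathList E a u p) (he : E u v)
    (hv : v ∉ p) : IsPathList E a v (p ++ [v]) := by
  obtain ⟨hch, hhd, hlast, hnd⟩ := hp
  refine ⟨List.isChain_append.2 ⟨hch, List.isChain_singleton v, ?_⟩, ?_, List.getLast?_concat,
    List.nodup_append.2 ⟨hnd, List.nodup_singleton v, ?_⟩⟩
  · simp [hlast, he]
  · rw [List.head?_append, hhd]; rfl
  · rintro w hw b hb rfl
    exact hv (by simpa [List.mem_singleton.1 hb] using hw)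

lemma IsPathList.eq_append_pair {a b : V} {l : List V} (h : IsPathList E a b l) (hab : a ≠ b) :
    ∃ m u, l = m ++ [u, b] := by
  obtain ⟨-, hhd, hlast, -⟩ := h
  rcases l.eq_nil_or_concat with rfl | ⟨l', b', rfl⟩
  · simp at hhd
  · obtain rfl : b' = b := by simpa using hlast
    rcases l'.eq_nil_or_concat with rfl | ⟨m, u, rfl⟩
    · simp at hhd; exact absurd hhd.symm hab
    · exact ⟨m, u, by simp⟩

lemma IsIPath.exists_prefix {i b u : V} {l : List V} (h : IsIPath E VI i b l) (hu : u ∈ l)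
    (huI : u ∉ VI) : ∃ p, IsPathList E i u p ∧ ∀ w ∈ p, w ≠ i → w ∉ VI := by
  obtain ⟨-, hbI, -, ⟨hch, hhd, hlast, hnd⟩, hmid⟩ := h
  obtain ⟨p, s, rfl⟩ := List.append_of_mem hu
  have hsplit : p ++ u :: s = (p ++ [u]) ++ s := by simp
  rw [hsplit] at hch hhd hlast hnd hmid
  refine ⟨p ++ [u], ⟨hch.infix (List.prefix_append _ _).isInfix, ?_, List.getLast?_concat,
    hnd.sublist (List.sublist_append_left _ _)⟩,
    fun w hw hwi => hmid w (List.mem_append_left _ hw) hwi ?_⟩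
  · cases p <;> simpa using hhd
  · -- `b` is the last vertex, so it lies in `s` unless it is `u` itself, which is non-inner
    rintro rfl
    rw [List.getLast?_append] at hlast
    rcases hs : s.getLast? with _ | b'
    · simp [hs] at hlast; exact huI (hlast ▸ hbI)
    · simp [hs] at hlast; subst hlast
      exact List.disjoint_of_nodup_append hnd hw (List.mem_of_mem_getLast? hs)

lemma exists_path_of_mem_VNI {i u : V} (hu : u ∈ VNI E VI i) :
    ∃ p, IsPathList E i u p ∧ ∀ w ∈ p, w ≠ i → w ∉ VI := by
  obtain ⟨⟨b, l, hl, hul⟩, huI⟩ := hu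
  exact hl.exists_prefix hul huI

lemma self_notMem_NplusT (i : V) : i ∉ NplusT E VI i := by
  rintro ⟨b, l, ⟨-, -, -, ⟨-, -, -, hnd⟩, -⟩, hinf⟩
  simpa using hnd.sublist hinf.sublist

def NoICycle (E : V → V → Prop) (VI : Set V) : Prop :=
  ¬ ∃ l, IsCycle E l ∧ ∃! v, v ∈ l ∧ v ∈ VI

def UniqueIPaths (E : V → V → Prop) (VI : Set V) : Prop :=
  ∀ a ∈ VI, ∀ b ∈ VI, a ≠ b → ∃! l, IsIPath E VI a b l

lemma IsICStructure.noICycle {K : ℕ} (h : IsICStructure E VI K) : NoICycle E VI := h.2.1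

lemma IsICStructure.uniqueIPaths {K : ℕ} (h : IsICStructure E VI K) : UniqueIPaths E VI :=
  h.2.2.1

lemma not_adj_of_mem_VNI (hno : NoICycle E VI) {i u : V} (hi : i ∈ VI)
    (hu : u ∈ VNI E VI i) : ¬ E u i := by
  intro he
  obtain ⟨p, ⟨hch, hhd, hlast, hnd⟩, hpI⟩ := exists_path_of_mem_VNI hu
  refine hno ⟨p, ⟨?_, hnd, hch, u, i, hlast, hhd, he⟩, i, ⟨List.mem_of_mem_head? hhd, hi⟩, ?_⟩
  · rintro rfl; simp at hhd
  · rintro w ⟨hw, hwI⟩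
    by_contra hwi
    exact hpI w hw hwi hwI

lemma coeffCount_self (hno : NoICycle E VI) {i : V} (hi : i ∈ VI) :
    coeffCount E VI i i = 0 := by
  have hempty : {v | v ∈ VNI E VI i ∧ E v i} = ∅ :=
    Set.eq_empty_of_forall_notMem fun u hu => not_adj_of_mem_VNI hno hi hu.1 hu.2
  rw [coeffCount, hempty, Set.ncard_empty]

lemma coeffCount_of_mem_VI (huniq : UniqueIPaths E VI) {i v : V} (hi : i ∈ VI) (hv : v ∈ VI)
    (hvi : v ≠ i) (hvT : v ∉ NplusT E VI i) : coeffCount E VI i v = 1 := by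
  obtain ⟨l, hl, hl_unique⟩ := huniq i hi v hv hvi.symm
  obtain ⟨-, -, -, hpath, hmid⟩ := id hl
  obtain ⟨m, u, rfl⟩ := hpath.eq_append_pair hvi.symm
  obtain ⟨hch, -, -, hnd⟩ := hpath
  have hui : u ≠ i := by
    rintro rfl
    exact hvT ⟨v, _, hl, List.infix_append' _ _ _⟩
  have huv : u ≠ v := by
    rintro rfl
    simpa using hnd.sublist (List.sublist_append_right m _)
  have huI : u ∉ VI := hmid u (by simp) hui huv
  have he : E u v := by simpa using hch.infix (List.infix_append' m [u, v] [])
  rw [coeffCount, Set.ncard_eq_one]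
  refine ⟨u, Set.eq_singleton_iff_unique_mem.2 ⟨⟨⟨⟨v, _, hl, by simp⟩, huI⟩, he⟩, ?_⟩⟩
  rintro w ⟨hw, hwv⟩
  obtain ⟨p, hp, hpI⟩ := exists_path_of_mem_VNI hw
  have hvp : v ∉ p := fun h => hpI v h hvi hv
  have hpv := hl_unique _ ⟨hi, hv, hvi.symm, hp.concat hwv hvp, fun x hx hxi hxv => by
    rcases List.mem_append.1 hx with hx | hx
    · exact hpI x hx hxi
    · exact absurd (List.mem_singleton.1 hx) hxv⟩
  have hpm : p = m ++ [u] := List.append_cancel_right (by simpa using hpv)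
  simpa [hpm] using hp.2.2.1.symm

noncomputable def coeffZ (E : V → V → Prop) (VI : Set V) (i v : V) : ℕ :=
  VI.indicator (1 : V → ℕ) v + (VNI E VI i).indicator 1 v + coeffCount E VI i v

lemma Z_eq_sum_coeffZ_nsmul {F : Type*} [Fintype V] [AddCommMonoid F] (x : V → F) (i : V) :
    Z E VI x i = ∑ v, coeffZ E VI i v • x v := by
  simp only [Z, WI, Wsym, NplusG]
  rw [finsum_mem_add_distrib (Set.toFinite _), finsum_mem_finsum_mem_eq_sum_ncard_nsmul,
    finsum_mem_eq_sum_indicator_nsmul VI, finsum_mem_eq_sum_indicator_nsmul (VNI E VI i)]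
  simp only [coeffZ, coeffCount, add_smul, Finset.sum_add_distrib, add_assoc]

lemma coeffZ_self (hno : NoICycle E VI) {i : V} (hi : i ∈ VI) : coeffZ E VI i i = 1 := by
  simp [coeffZ, hi, VNI, coeffCount_self hno hi]

lemma even_coeffZ (huniq : UniqueIPaths E VI) (hc1 : CondC1 E VI) (hc2 : CondC2 E VI)
    {i v : V} (hi : i ∈ VI) (hvi : v ≠ i) (hvT : v ∉ NplusT E VI i) :
    Even (coeffZ E VI i v) := by
  by_cases hvI : v ∈ VI
  · simp [coeffZ, hvI, VNI, coeffCount_of_mem_VI huniq hi hvI hvi hvT]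
  by_cases hvN : v ∈ VNI E VI i
  · simpa [coeffZ, hvI, hvN, parity_simps] using hc1 i hi v hvN hvT
  · have hvTree : v ∉ treeVerts E VI i := fun h => hvN ⟨h, hvI⟩
    simp [coeffZ, hvI, hvN, hc2 i hi v hvTree]

end ICPaper

theorem theorem1_sufficiency_general {V : Type*} [Fintype V]
    (F : Type*) [Field F] [CharP F 2]
    (E : V → V → Prop) (VI : Set V) (K : ℕ) (hIC : IsICStructure E VI K)
    (hc1 : CondC1 E VI) (hc2 : CondC2 E VI)
    (i : V) (hi : i ∈ VI) :
    ∃ S ⊆ NplusT E VI i, ∀ x : V → F,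
      Z E VI x i = x i + ∑ᶠ j ∈ S, x j := by
  have hci : Odd (coeffZ E VI i i) := by
    rw [coeffZ_self hIC.noICycle hi]
    exact odd_one
  have hodd : ∀ v ≠ i, Odd (coeffZ E VI i v) → v ∈ NplusT E VI i := fun v hvi hv => by
    by_contra hvT
    exact Nat.not_even_iff_odd.2 hv (even_coeffZ hIC.uniqueIPaths hc1 hc2 hi hvi hvT)
  refine ⟨{v | v ∈ NplusT E VI i ∧ Odd (coeffZ E VI i v)}, fun v hv => hv.1, fun x => ?_⟩
  rw [Z_eq_sum_coeffZ_nsmul, sum_nsmul_eq_add_finsum_mem_odd hci (self_notMem_NplusT i) hodd]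

/-- **Theorem 1, sufficiency.** If a `K`-IC structure satisfies c1 and c2, then for every
inner vertex `i` the combination `Z_i` equals `x_i ⊕ (⊕_{j ∈ S} x_j)` for some subset
`S ⊆ N^+_{T i}(i)`. -/
theorem theorem1_sufficiency {V : Type*} [Fintype V] [DecidableEq V]
    (F : Type*) [Field F] [Fintype F] [CharP F 2]
    (E : V → V → Prop) (VI : Set V) (K : ℕ) (hIC : IsICStructure E VI K)
    (hc1 : CondC1 E VI) (hc2 : CondC2 E VI)
    (i : V) (hi : i ∈ VI) :
    ∃ S ⊆ NplusT E VI i, ∀ x : V → F,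
      Z E VI x i = x i + ∑ᶠ j ∈ S, x j :=
  theorem1_sufficiency_general F E VI K hIC hc1 hc2 i hi
end

section
/- Let G be a K-IC structure with inner vertex set V_I that satisfies condition c2 but violates condition c1; say, in the rooted tree T_i of an inner vertex i, the non-inner vertex j ∈ V_NI(i) \ N^+_{T_i}(i) has a_{i,j} even. Then in the combination Z_i = W_I ⊕ (⊕_{v ∈ V_NI(i)} W_v) of Construction-1 index code symbols over a field of characteristic 2, the message x_j occurs with coefficient 1 (it appears once in W_j and an even number of further times, so it is not cancelled); since j ∉ N^+_G(i), the user requesting x_i cannot decode x_i from Z_i. (Theorem 1, necessity of c1) -/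
open ICPaper

/-! The coefficient of `x_j` in `Z_i` is `[j ∈ V_I] + [j ∈ V_NI(i)] + a_{i,j}`, which is `1` in
characteristic 2 when `j ∈ V_NI(i)` and `a_{i,j}` is even. An edge `i → w` out of an inner
vertex lies on an I-path, where the inner vertex `i` can only be the start, so `w ∈ N^+_{T_i}(i)`;
hence `j ∉ N^+_G(i)`, and evaluating at the message vector `e_j` shows that `Z_i` is not of the
form `x_i + (side information of user i)`. -/

theorem List.Nodup.ne_of_pair_infix_of_getLast?_eq {α : Type*} {l : List α} {u w b : α}
    (hl : l.Nodup) (hb : l.getLast? = some b) (h : [u, w] <:+: l) : u ≠ b := by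
  obtain ⟨s, t, rfl⟩ := h
  have hsplit : s ++ [u, w] ++ t = (s ++ [u]) ++ (w :: t) := by simp
  rw [hsplit] at hl hb
  rw [List.getLast?_append_of_ne_nil _ (List.cons_ne_nil w t)] at hb
  have hbt : b ∈ w :: t := List.mem_of_getLast? hb
  have hut : u ∉ w :: t := List.disjoint_of_nodup_append hl (by simp)
  exact fun hub => hut (hub ▸ hbt)

theorem finsum_mem_pi_single {V F : Type*} [AddCommMonoid F] [DecidableEq V]
    (s : Set V) (j : V) [Decidable (j ∈ s)] (a : F) :
    ∑ᶠ k ∈ s, Pi.single j a k = if j ∈ s then a else 0 := by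
  rw [finsum_mem_def, finsum_eq_single _ j fun k hk => by simp [hk]]
  simp [Set.indicator_apply]

theorem Set.Finite.finsum_mem_ite_eq_ncard_nsmul {V F : Type*} [AddCommMonoid F] {s : Set V}
    (hs : s.Finite) (P : V → Prop) [DecidablePred P] (a : F) :
    ∑ᶠ v ∈ s, (if P v then a else 0) = {v | v ∈ s ∧ P v}.ncard • a := by
  rw [finsum_mem_eq_finite_toFinset_sum _ hs, Finset.sum_ite, Finset.sum_const_zero, add_zero,
    Finset.sum_const, ← Set.ncard_coe_finset]
  congr 2
  ext v
  simp

namespace ICPaper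

variable {V F : Type*} {E : V → V → Prop} {VI : Set V}

theorem IsIPath.eq_of_pair_infix_of_mem {a b u w : V} {l : List V} (hp : IsIPath E VI a b l)
    (h : [u, w] <:+: l) (hu : u ∈ VI) : u = a := by
  obtain ⟨-, -, -, ⟨-, -, hlast, hnodup⟩, hinner⟩ := hp
  by_contra hua
  exact hinner u (h.subset (by simp)) hua (hnodup.ne_of_pair_infix_of_getLast?_eq hlast h) hu

theorem IsICStructure.NplusG_subset_NplusT {K : ℕ} {i : V} (hIC : IsICStructure E VI K)
    (hi : i ∈ VI) : NplusG E i ⊆ NplusT E VI i := by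
  intro w hw
  obtain ⟨a, b, l, hp, hiw⟩ := hIC.2.2.2.2 i w hw
  obtain rfl := hp.eq_of_pair_infix_of_mem hiw hi
  exact ⟨b, l, hp, hiw⟩

open Classical in
theorem Z_pi_single [Finite V] [DecidableEq V] [AddCommMonoid F] (i j : V) (a : F) :
    Z E VI (Pi.single j a) i =
      (if j ∈ VI then a else 0) +
        ((if j ∈ VNI E VI i then a else 0) + coeffCount E VI i j • a) := by
  have hW : ∀ v, Wsym E (Pi.single j a) v =
      (Pi.single j a : V → F) v + if E v j then a else 0 := fun v => by
    rw [Wsym, finsum_mem_pi_single]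
    rfl
  rw [Z, WI, finsum_mem_pi_single, finsum_mem_congr rfl fun v _ => hW v,
    finsum_mem_add_distrib (Set.toFinite _), finsum_mem_pi_single,
    (Set.toFinite _).finsum_mem_ite_eq_ncard_nsmul, coeffCount]

end ICPaper

theorem theorem1_necessity_c1_general {V : Type*} [Fintype V] [DecidableEq V]
    (F : Type*) [Field F] [CharP F 2]
    (E : V → V → Prop) (VI : Set V) (K : ℕ) (hIC : IsICStructure E VI K)
    (i : V) (hi : i ∈ VI) (j : V) (hj : j ∈ VNI E VI i) (hjd : j ∉ NplusT E VI i)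
    (heven : Even (coeffCount E VI i j)) :
    j ∉ NplusG E i ∧
    Z E VI (Pi.single j (1 : F)) i = 1 ∧
    ¬ ∃ S ⊆ NplusG E i, ∀ x : V → F,
        Z E VI x i = x i + ∑ᶠ k ∈ S, x k := by
  classical
  have hjI : j ∉ VI := hj.2
  have hij : i ≠ j := fun h => hjI (h ▸ hi)
  have hjG : j ∉ NplusG E i := fun h => hjd (hIC.NplusG_subset_NplusT hi h)
  have hZ : Z E VI (Pi.single j (1 : F)) i = 1 := by
    rw [Z_pi_single, if_neg hjI, if_pos hj, nsmul_one,
      (CharP.cast_eq_zero_iff F 2 _).2 heven.two_dvd, add_zero, zero_add]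
  refine ⟨hjG, hZ, ?_⟩
  rintro ⟨S, hS, hdecode⟩
  have hx := hdecode (Pi.single j 1)
  rw [hZ, finsum_mem_pi_single, if_neg fun h => hjG (hS h), Pi.single_eq_of_ne hij,
    zero_add] at hx
  exact one_ne_zero hx

/-- **Theorem 1, necessity of c1.** If c2 holds but, for an inner vertex `i`, some
`j ∈ V_NI(i) \ N^+_{T i}(i)` has `a_{i,j}` even, then the message `x_j` occurs in `Z_i`
with coefficient `1`; since `j ∉ N^+_G(i)`, the user requesting `x_i` cannot decode `x_i`
from `Z_i`. -/
theorem theorem1_necessity_c1 {V : Type*} [Fintype V] [DecidableEq V]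
    (F : Type*) [Field F] [Fintype F] [CharP F 2]
    (E : V → V → Prop) (VI : Set V) (K : ℕ) (hIC : IsICStructure E VI K)
    (hc2 : CondC2 E VI)
    (i : V) (hi : i ∈ VI) (j : V) (hj : j ∈ VNI E VI i) (hjd : j ∉ NplusT E VI i)
    (heven : Even (coeffCount E VI i j)) :
    j ∉ NplusG E i ∧
    Z E VI (Pi.single j (1 : F)) i = 1 ∧
    ¬ ∃ S ⊆ NplusG E i, ∀ x : V → F,
        Z E VI x i = x i + ∑ᶠ k ∈ S, x k :=
  theorem1_necessity_c1_general F E VI K hIC i hi j hj hjd heven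
end

section
/- Let G be a K-IC structure with inner vertex set V_I which contains no cycle consisting only of non-inner vertices. Then G satisfies both condition c1 (a_{i,j} is odd for every inner vertex i and every j ∈ V_NI(i) \ N^+_{T_i}(i)) and condition c2 (b_{i,j} = 0 for every inner vertex i and every j ∈ V(G) \ V(T_i)). (Theorem 2) -/
open ICPaper

/-!
Every vertex `v` of `V_NI(i)` lies on an I-path from `i`, and every edge `v → j` lies on some
I-path `P`. Following the I-path from `i` to `v`, the edge `v → j` and then `P` from `j` onwards
is a walk from `i` to an inner vertex whose intermediate vertices are non-inner. Since every cycle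
meets at least two inner vertices (no I-cycle and no cycle of non-inner vertices), this walk has
no repeated vertex and ends at a vertex different from `i`, so it is an I-path of `T_i` through
`j`. This gives c2 at once. For c1, when `j` has the predecessor `p ≠ i` on the I-path `Q` of
`T_i` through `j`, the glued path through any `v ∈ V_NI(i)` with `v → j` coincides with `Q` by
uniqueness of I-paths, so `v = p` and `a_{i,j} = 1`.
-/

namespace List

variable {α : Type*}

theorem mem_of_pair_infix_cons {w j y : α} {l : List α} (h : [w, j] <:+: y :: l) : j ∈ l := by
  rcases infix_cons_iff.mp h with h | h
  · exact (cons_prefix_cons.mp h).2.subset (mem_singleton_self j)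
  · exact h.mem (by simp)

theorem mem_of_pair_infix_append_singleton {p j y : α} {l : List α}
    (h : [p, j] <:+: l ++ [y]) : p ∈ l := by
  have h' : [j, p] <:+: y :: l.reverse := by simpa using reverse_infix.mpr h
  simpa using mem_of_pair_infix_cons h'

theorem exists_pair_infix_cons_of_mem {j x : α} {l : List α} (h : j ∈ l) :
    ∃ p, [p, j] <:+: x :: l := by
  induction l generalizing x with
  | nil => simp at h
  | cons y t ih =>
    rcases mem_cons.mp h with rfl | h
    · exact ⟨x, [], t, rfl⟩
    · obtain ⟨p, hp⟩ := ih (x := y) h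
      exact ⟨p, infix_cons hp⟩

theorem Nodup.eq_of_pair_infix {l : List α} {u w j : α} (hl : l.Nodup)
    (hu : [u, j] <:+: l) (hw : [w, j] <:+: l) : u = w := by
  induction l with
  | nil => simp at hu
  | cons x t ih =>
    have ht := (nodup_cons.mp hl).2
    rcases infix_cons_iff.mp hu with hu | hu <;> rcases infix_cons_iff.mp hw with hw | hw
    · exact (cons_prefix_cons.mp hu).1.trans (cons_prefix_cons.mp hw).1.symm
    · obtain ⟨t', rfl⟩ := (cons_prefix_cons.mp hu).2
      exact absurd (mem_of_pair_infix_cons hw) (nodup_cons.mp ht).1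
    · obtain ⟨t', rfl⟩ := (cons_prefix_cons.mp hw).2
      exact absurd (mem_of_pair_infix_cons hu) (nodup_cons.mp ht).1
    · exact ih ht hu hw

theorem exists_eq_append_cons_append_cons_of_not_nodup {l : List α} (h : ¬ l.Nodup) :
    ∃ x l₁ l₂ l₃, l = l₁ ++ x :: (l₂ ++ x :: l₃) := by
  induction l with
  | nil => simp at h
  | cons a t ih =>
    by_cases ha : a ∈ t
    · obtain ⟨l₂, l₃, rfl⟩ := append_of_mem ha
      exact ⟨a, [], l₂, l₃, rfl⟩
    · obtain ⟨x, l₁, l₂, l₃, rfl⟩ := ih (by simpa [nodup_cons, ha] using h)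
      exact ⟨x, a :: l₁, l₂, l₃, rfl⟩

end List

namespace ICPaper

open List

variable {V : Type*} {E : V → V → Prop} {VI : Set V}

theorem exists_isCycle_subset_of_isChain {x : V} {l : List V} (h : (x :: l ++ [x]).IsChain E) :
    ∃ m, IsCycle E m ∧ m ⊆ x :: l := by
  induction hn : l.length using Nat.strong_induction_on generalizing x l with
  | _ n ih =>
  by_cases hnd : (x :: l).Nodup
  · refine ⟨x :: l, ⟨cons_ne_nil _ _, hnd, h.prefix (prefix_append _ _), _, x,
      getLast?_eq_some_getLast (cons_ne_nil _ _), rfl, ?_⟩, Subset.refl _⟩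
    exact h.rel_getLast_head_of_append (cons_ne_nil _ _) (cons_ne_nil _ _)
  · obtain ⟨y, l₁, l₂, l₃, hl⟩ := exists_eq_append_cons_append_cons_of_not_nodup hnd
    have hlen : l₂.length < n := by
      have := congrArg length hl
      simp only [length_cons, length_append] at this
      omega
    have hinf : y :: l₂ ++ [y] <:+: x :: l ++ [x] := ⟨l₁, l₃ ++ [x], by rw [hl]; simp⟩
    obtain ⟨m, hm, hsub⟩ := ih _ hlen (h.infix hinf) rfl
    exact ⟨m, hm, List.Subset.trans hsub (by rw [hl]; intro v; simp only [mem_cons, mem_append]; tauto)⟩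

def CyclesHaveTwoInner (E : V → V → Prop) (VI : Set V) : Prop :=
  ∀ m x, IsCycle E m → ∃ v ∈ m, v ∈ VI ∧ v ≠ x

theorem cyclesHaveTwoInner_of_not_exists_isCycle
    (hNC : ¬ ∃ l, IsCycle E l ∧ ∀ v ∈ l, v ∉ VI)
    (hNI : ¬ ∃ l, IsCycle E l ∧ ∃! v, v ∈ l ∧ v ∈ VI) :
    CyclesHaveTwoInner E VI := by
  intro m x hm
  by_contra! h
  by_cases hx : x ∈ m ∧ x ∈ VI
  · exact hNI ⟨m, hm, x, hx, fun v hv => h v hv.1 hv.2⟩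
  · exact hNC ⟨m, hm, fun v hv hvI => hx (h v hv hvI ▸ ⟨hv, hvI⟩)⟩

namespace CyclesHaveTwoInner

theorem not_isChain_closed (hE : CyclesHaveTwoInner E VI) {x : V} {l : List V}
    (hl : ∀ v ∈ l, v ∉ VI) : ¬ (x :: l ++ [x]).IsChain E := by
  intro h
  obtain ⟨m, hm, hsub⟩ := exists_isCycle_subset_of_isChain h
  obtain ⟨v, hv, hvI, hvx⟩ := hE m x hm
  rcases mem_cons.mp (hsub hv) with rfl | hv
  · exact hvx rfl
  · exact hl v hv hvI

theorem isIPath (hE : CyclesHaveTwoInner E VI) {a b : V} {s : List V} (ha : a ∈ VI)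
    (hb : b ∈ VI) (hs : ∀ v ∈ s, v ∉ VI) (h : (a :: s ++ [b]).IsChain E) :
    IsIPath E VI a b (a :: s ++ [b]) := by
  have hab : a ≠ b := by
    rintro rfl
    exact hE.not_isChain_closed hs h
  have hsnd : s.Nodup := by
    by_contra hnd
    obtain ⟨x, l₁, l₂, l₃, rfl⟩ := exists_eq_append_cons_append_cons_of_not_nodup hnd
    exact hE.not_isChain_closed (x := x) (l := l₂) (fun v hv => hs v (by simp [hv]))
      (h.infix ⟨a :: l₁, l₃ ++ [b], by simp⟩)
  have has : a ∉ s := fun h => hs a h ha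
  have hbs : b ∉ s := fun h => hs b h hb
  refine ⟨ha, hb, hab, ⟨h, rfl, getLast?_concat, ?_⟩, ?_⟩
  · simp only [cons_append, nodup_cons, mem_append, mem_singleton, nodup_append]
    grind
  · intro v hv hva hvb
    simp only [cons_append, mem_cons, mem_append, not_mem_nil, or_false] at hv
    grind

end CyclesHaveTwoInner

theorem IsIPath.exists_eq_cons_append {a b : V} {l : List V} (h : IsIPath E VI a b l) :
    ∃ s, l = a :: s ++ [b] ∧ ∀ v ∈ s, v ∉ VI := by
  obtain ⟨-, -, hab, ⟨-, hh, hg, hnd⟩, hmid⟩ := h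
  obtain ⟨t, rfl⟩ := head?_eq_some_iff.mp hh
  obtain ⟨ys, hys⟩ := getLast?_eq_some_iff.mp hg
  obtain ⟨s, rfl⟩ : ∃ s, t = s ++ [b] := by
    cases ys with
    | nil => exact absurd (cons_eq_cons.mp hys).1 hab
    | cons y s => exact ⟨s, (cons_eq_cons.mp hys).2⟩
  refine ⟨s, rfl, fun v hv hvI => hmid v (by simp [hv]) ?_ ?_ hvI⟩
  · rintro rfl
    exact (nodup_cons.mp hnd).1 (mem_append_left _ hv)
  · rintro rfl
    exact (nodup_append.mp (nodup_cons.mp hnd).2).2.2 v hv v (mem_singleton_self v) rfl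

theorem CyclesHaveTwoInner.exists_isIPath_of_edge (hE : CyclesHaveTwoInner E VI)
    {i c a b v j w : V} {R P : List V} (hR : IsIPath E VI i c R) (hvR : v ∈ R) (hvI : v ∉ VI)
    (hvj : E v j) (hP : IsIPath E VI a b P) (hjP : [w, j] <:+: P) :
    ∃ l, IsIPath E VI i b l ∧ [v, j] <:+: l := by
  obtain ⟨s, rfl, hs⟩ := hR.exists_eq_cons_append
  obtain ⟨t, rfl, ht⟩ := hP.exists_eq_cons_append
  have hvs : v ∈ s := by
    simp only [cons_append, mem_cons, mem_append, not_mem_nil, or_false] at hvR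
    rcases hvR with rfl | hvs | rfl
    · exact absurd hR.1 hvI
    · exact hvs
    · exact absurd hR.2.1 hvI
  obtain ⟨s₁, s₂, rfl⟩ := append_of_mem hvs
  obtain ⟨t₁, u, rfl, hu⟩ : ∃ t₁ u, t = t₁ ++ u ∧ (u ++ [b]).head? = some j := by
    rcases mem_append.mp (mem_of_pair_infix_cons hjP) with hjt | hjb
    · obtain ⟨t₁, t₂, rfl⟩ := append_of_mem hjt
      exact ⟨t₁, j :: t₂, rfl, rfl⟩
    · exact ⟨t, [], (append_nil t).symm, by simpa [eq_comm] using hjb⟩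
  obtain ⟨r, hr⟩ := head?_eq_some_iff.mp hu
  have hsplit : i :: (s₁ ++ v :: u) ++ [b] = (i :: s₁ ++ [v]) ++ (u ++ [b]) := by simp
  refine ⟨i :: (s₁ ++ v :: u) ++ [b], hE.isIPath hR.1 hP.2.1 ?_ ?_, ?_⟩
  · intro x hx
    rcases mem_append.mp hx with hx | hx
    · exact hs x (mem_append_left _ hx)
    · rcases mem_cons.mp hx with rfl | hx
      · exact hvI
      · exact ht x (mem_append_right _ hx)
  · rw [hsplit]
    refine IsChain.append (hR.2.2.2.1.1.prefix ⟨s₂ ++ [c], by simp⟩)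
      (hP.2.2.2.1.1.suffix ⟨a :: t₁, by simp⟩) ?_
    intro x hx y hy
    rw [getLast?_concat, Option.mem_def, Option.some_inj] at hx
    rw [hu, Option.mem_def, Option.some_inj] at hy
    exact hx ▸ hy ▸ hvj
  · rw [hsplit, hr]
    exact ⟨i :: s₁, r, by simp⟩

theorem coeffCount_eq_one {K : ℕ} (hIC : IsICStructure E VI K) (hE : CyclesHaveTwoInner E VI)
    {i j : V} (hi : i ∈ VI) (hj : j ∈ VNI E VI i) (hjN : j ∉ NplusT E VI i) :
    coeffCount E VI i j = 1 := by
  obtain ⟨⟨c, Q, hQ, hjQ⟩, hjI⟩ := hj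
  obtain ⟨s, rfl, hs⟩ := hQ.exists_eq_cons_append
  have hjs : j ∈ s ++ [c] := by
    rcases mem_cons.mp (show j ∈ i :: (s ++ [c]) by simpa using hjQ) with rfl | hjs
    · exact absurd hi hjI
    · exact hjs
  obtain ⟨p, hpj⟩ := exists_pair_infix_cons_of_mem (x := i) hjs
  have hpVNI : p ∈ VNI E VI i := by
    refine ⟨⟨c, _, hQ, hpj.mem (by simp)⟩, ?_⟩
    rcases mem_cons.mp (mem_of_pair_infix_append_singleton hpj) with rfl | hps
    · exact absurd ⟨c, _, hQ, hpj⟩ hjN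
    · exact hs p hps
  suffices {v | v ∈ VNI E VI i ∧ E v j} = {p} by
    rw [coeffCount, this, Set.ncard_singleton]
  ext v
  constructor
  · rintro ⟨⟨⟨c', R, hR, hvR⟩, hvI⟩, hvj⟩
    obtain ⟨l, hl, hvjl⟩ := hE.exists_isIPath_of_edge hR hvR hvI hvj hQ hpj
    rw [(hIC.2.2.1 i hi c hQ.2.1 hQ.2.2.1).unique hl hQ] at hvjl
    exact hQ.2.2.2.1.2.2.2.eq_of_pair_infix hvjl hpj
  · rintro rfl
    exact ⟨hpVNI, isChain_pair.mp (hQ.2.2.2.1.1.infix hpj)⟩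

theorem coeffCount_eq_zero {K : ℕ} (hIC : IsICStructure E VI K) (hE : CyclesHaveTwoInner E VI)
    {i j : V} (hj : j ∉ treeVerts E VI i) : coeffCount E VI i j = 0 := by
  suffices {v | v ∈ VNI E VI i ∧ E v j} = ∅ by
    rw [coeffCount, this, Set.ncard_empty]
  refine Set.eq_empty_iff_forall_notMem.mpr ?_
  rintro v ⟨⟨⟨c, R, hR, hvR⟩, hvI⟩, hvj⟩
  obtain ⟨a, b, P, hP, hvjP⟩ := hIC.2.2.2.2 v j hvj
  obtain ⟨l, hl, hvjl⟩ := hE.exists_isIPath_of_edge hR hvR hvI hvj hP hvjP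
  exact hj ⟨b, l, hl, hvjl.mem (by simp)⟩

end ICPaper

theorem theorem2_general {V : Type*}
    (E : V → V → Prop) (VI : Set V) (K : ℕ) (hIC : IsICStructure E VI K)
    (hNC : ¬ ∃ l, IsCycle E l ∧ ∀ v ∈ l, v ∉ VI) :
    CondC1 E VI ∧ CondC2 E VI := by
  have hE := cyclesHaveTwoInner_of_not_exists_isCycle hNC hIC.2.1
  exact ⟨fun i hi j hj hjN => coeffCount_eq_one hIC hE hi hj hjN ▸ odd_one,
    fun _ _ _ hj => coeffCount_eq_zero hIC hE hj⟩

/-- **Theorem 2.** A `K`-IC structure with no cycle consisting only of non-inner vertices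
satisfies both conditions c1 and c2. -/
theorem theorem2 {V : Type*} [Fintype V] [DecidableEq V]
    (E : V → V → Prop) (VI : Set V) (K : ℕ) (hIC : IsICStructure E VI K)
    (hNC : ¬ ∃ l, IsCycle E l ∧ ∀ v ∈ l, v ∉ VI) :
    CondC1 E VI ∧ CondC2 E VI :=
  theorem2_general E VI K hIC hNC
end

section
/- Let G be a K-IC structure with inner vertex set V_I, let i be an inner vertex, and let j ∈ V_NI(i) \ N^+_{T_i}(i) be a non-inner vertex at depth ≥ 2 in T_i, so that j has a unique in-neighbour p in T_i. If q ∈ V_NI(i) is a non-inner vertex of T_i with q ≠ p and with an edge (q, j) ∈ E, then there exists a directed path in G from j to q; consequently (using the edge from q to j) G contains a cycle consisting only of non-inner vertices and passing through j and q. (Claim used in Theorem 2, Part 1) -/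
open ICPaper

/-!
Cutting the I-path through `q` at `q`, and the one through `j` at `j`, gives a path `P` from `i`
to `q` and a path `S` from `j` to an inner vertex `c`, all of whose other vertices are non-inner.
If `P` and `S` were disjoint, `P`, the edge `(q, j)` and `S` would form an I-path from `i`, making
`q ≠ p` an in-neighbour of `j` in `T i`. So they meet at a vertex `v`, necessarily non-inner;
`S` up to `v` followed by `P` from `v` is a non-inner walk from `j` to `q`, which shortens to a
path, and the edge `(q, j)` closes it into a cycle.
-/

namespace ICPaper

variable {V : Type*} {E : V → V → Prop} {a b v : V} {l : List V}

def inducedRel (E : V → V → Prop) (Q : V → Prop) (x y : V) : Prop :=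
  E x y ∧ Q x ∧ Q y

theorem exists_nodup_isChain_of_reflTransGen {r : V → V → Prop}
    (h : Relation.ReflTransGen r a b) :
    ∃ l : List V, l.IsChain r ∧ l.Nodup ∧ l.head? = some a ∧ l.getLast? = some b := by
  induction h using Relation.ReflTransGen.head_induction_on with
  | refl => exact ⟨[b], .singleton b, List.nodup_singleton b, rfl, rfl⟩
  | @head x y hxy _ ih =>
    obtain ⟨l, hchain, hnodup, hhead, hlast⟩ := ih
    obtain ⟨t, rfl⟩ : ∃ t, l = y :: t := List.head?_eq_some_iff.mp hhead
    by_cases hx : x ∈ y :: t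
    · obtain ⟨l₁, l₂, hsplit⟩ := List.append_of_mem hx
      have hsuffix : x :: l₂ <:+ y :: t := ⟨l₁, hsplit.symm⟩
      refine ⟨x :: l₂, hchain.suffix hsuffix, hnodup.sublist hsuffix.sublist, rfl, ?_⟩
      rw [← hlast, hsplit, List.getLast?_append_of_ne_nil _ (List.cons_ne_nil _ _)]
    · exact ⟨x :: y :: t, hchain.cons_cons hxy, List.nodup_cons.mpr ⟨hx, hnodup⟩, rfl,
        by rw [List.getLast?_cons_cons, hlast]⟩

theorem reflTransGen_inducedRel_of_isChain {Q : V → Prop} (hchain : l.IsChain E)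
    (hQ : ∀ x ∈ l, Q x) (ha : l.head? = some a) (hb : l.getLast? = some b) :
    Relation.ReflTransGen (inducedRel E Q) a b := by
  have hne : l ≠ [] := by rintro rfl; simp at ha
  have hind : l.IsChain (inducedRel E Q) :=
    hchain.imp_of_mem_imp fun x y hx hy hxy => ⟨hxy, hQ x hx, hQ y hy⟩
  obtain rfl : l.head hne = a := by simpa [List.head?_eq_some_head hne] using ha
  obtain rfl : l.getLast hne = b := by simpa [List.getLast?_eq_some_getLast hne] using hb
  exact List.relationReflTransGen_of_exists_isChain l hind hne

theorem exists_isPathList_of_reflTransGen_inducedRel {Q : V → Prop}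
    (h : Relation.ReflTransGen (inducedRel E Q) a b) (ha : Q a) :
    ∃ l, IsPathList E a b l ∧ ∀ x ∈ l, Q x := by
  obtain ⟨l, hchain, hnodup, hhead, hlast⟩ := exists_nodup_isChain_of_reflTransGen h
  refine ⟨l, ⟨hchain.imp fun _ _ hxy => hxy.1, hhead, hlast, hnodup⟩, ?_⟩
  refine hchain.induction Q l (fun _ _ hxy _ => hxy.2.2) fun hne => ?_
  obtain rfl : l.head hne = a := by simpa [List.head?_eq_some_head hne] using hhead
  exact ha

namespace IsPathList

theorem head_mem (h : IsPathList E a b l) : a ∈ l :=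
  List.mem_of_mem_head? h.2.1

theorem getLast_mem (h : IsPathList E a b l) : b ∈ l :=
  List.mem_of_mem_getLast? h.2.2.1

theorem isCycle (h : IsPathList E a b l) (hba : E b a) : IsCycle E l :=
  ⟨List.ne_nil_of_mem h.head_mem, h.2.2.2, h.1, b, a, h.2.2.1, h.2.1, hba⟩

theorem exists_split (h : IsPathList E a b l) (hv : v ∈ l) :
    ∃ l₁ l₂, IsPathList E a v l₁ ∧ IsPathList E v b l₂ ∧ l₁ ⊆ l ∧ l₂ ⊆ l ∧
      ∀ x ∈ l₁, x ∈ l₂ → x = v := by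
  obtain ⟨l₁, l₂, rfl⟩ := List.append_of_mem hv
  obtain ⟨hchain, hhead, hlast, hnodup⟩ := h
  refine ⟨l₁ ++ [v], v :: l₂, ⟨hchain.prefix ⟨l₂, by simp⟩, ?_, List.getLast?_concat, ?_⟩,
    ⟨hchain.suffix ⟨l₁, rfl⟩, rfl, ?_, hnodup.sublist (List.sublist_append_right _ _)⟩,
    by simp, by simp, ?_⟩
  · simpa [List.head?_append] using hhead
  · exact hnodup.sublist (by simp)
  · rwa [List.getLast?_append_of_ne_nil _ (List.cons_ne_nil _ _)] at hlast
  · intro x hx₁ hx₂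
    rcases List.mem_append.mp hx₁ with hx | hx
    · exact absurd rfl ((List.nodup_append.mp hnodup).2.2 x hx x hx₂)
    · exact List.mem_singleton.mp hx

theorem reflTransGen_inducedRel_to_mem {Q : V → Prop} (h : IsPathList E a b l) (hv : v ∈ l)
    (hvb : v ≠ b) (hQ : ∀ x ∈ l, x ≠ b → Q x) : Relation.ReflTransGen (inducedRel E Q) a v := by
  obtain ⟨l₁, l₂, h₁, h₂, hl₁, -, hmeet⟩ := h.exists_split hv
  refine reflTransGen_inducedRel_of_isChain h₁.1 (fun x hx => hQ x (hl₁ hx) ?_) h₁.2.1 h₁.2.2.1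
  rintro rfl
  exact hvb (hmeet x hx h₂.getLast_mem).symm

theorem reflTransGen_inducedRel_from_mem {Q : V → Prop} (h : IsPathList E a b l) (hv : v ∈ l)
    (hva : v ≠ a) (hQ : ∀ x ∈ l, x ≠ a → Q x) : Relation.ReflTransGen (inducedRel E Q) v b := by
  obtain ⟨l₁, l₂, h₁, h₂, -, hl₂, hmeet⟩ := h.exists_split hv
  refine reflTransGen_inducedRel_of_isChain h₂.1 (fun x hx => hQ x (hl₂ hx) ?_) h₂.2.1 h₂.2.2.1
  rintro rfl
  exact hva (hmeet x h₁.head_mem hx).symm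

theorem append {x y : V} {l₁ l₂ : List V} (h₁ : IsPathList E a x l₁) (h₂ : IsPathList E y b l₂)
    (hxy : E x y) (hdisj : ∀ z ∈ l₁, z ∉ l₂) : IsPathList E a b (l₁ ++ l₂) := by
  refine ⟨h₁.1.append h₂.1 (by simp [h₁.2.2.1, h₂.2.1, hxy]), by simp [h₁.2.1], ?_,
    List.nodup_append.mpr ⟨h₁.2.2.2, h₂.2.2.2, fun z hz w hw hzw => hdisj z hz (hzw ▸ hw)⟩⟩
  rw [List.getLast?_append_of_ne_nil _ (List.ne_nil_of_mem h₂.head_mem), h₂.2.2.1]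

theorem pair_infix_append {x y : V} {l₁ l₂ : List V} (h₁ : IsPathList E a x l₁)
    (h₂ : IsPathList E y b l₂) : [x, y] <:+: l₁ ++ l₂ := by
  obtain ⟨l₁', rfl⟩ := List.getLast?_eq_some_iff.mp h₁.2.2.1
  obtain ⟨l₂', rfl⟩ := List.head?_eq_some_iff.mp h₂.2.1
  exact ⟨l₁', l₂', by simp⟩

end IsPathList

section IPaths

variable {VI : Set V}

theorem IsIPath.exists_path_to (h : IsIPath E VI a b l) (hv : v ∈ l) (hvI : v ∉ VI) :
    ∃ P, IsPathList E a v P ∧ ∀ x ∈ P, x ≠ a → x ∉ VI := by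
  obtain ⟨-, hbI, -, hl, hlI⟩ := h
  obtain ⟨P, S, hP, hS, hPl, -, hmeet⟩ := hl.exists_split hv
  refine ⟨P, hP, fun x hx hxa => hlI x (hPl hx) hxa ?_⟩
  rintro rfl
  exact hvI (hmeet x hx hS.getLast_mem ▸ hbI)

theorem IsIPath.exists_path_from (h : IsIPath E VI a b l) (hv : v ∈ l) (hvI : v ∉ VI) :
    ∃ S, IsPathList E v b S ∧ ∀ x ∈ S, x ≠ b → x ∉ VI := by
  obtain ⟨haI, -, -, hl, hlI⟩ := h
  obtain ⟨P, S, hP, hS, -, hSl, hmeet⟩ := hl.exists_split hv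
  refine ⟨S, hS, fun x hx hxb => hlI x (hSl hx) ?_ hxb⟩
  rintro rfl
  exact hvI (hmeet x hP.head_mem hx ▸ haI)

theorem treeEdge_of_disjoint_paths {i c x y : V} {l₁ l₂ : List V} (hi : i ∈ VI) (hc : c ∈ VI)
    (hic : i ≠ c) (h₁ : IsPathList E i x l₁) (h₁I : ∀ z ∈ l₁, z ≠ i → z ∉ VI)
    (h₂ : IsPathList E y c l₂) (h₂I : ∀ z ∈ l₂, z ≠ c → z ∉ VI) (hxy : E x y)
    (hdisj : ∀ z ∈ l₁, z ∉ l₂) : treeEdge E VI i x y :=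
  ⟨c, l₁ ++ l₂, ⟨hi, hc, hic, h₁.append h₂ hxy hdisj, fun z hz hzi hzc =>
    (List.mem_append.mp hz).elim (h₁I z · hzi) (h₂I z · hzc)⟩, h₁.pair_infix_append h₂⟩

theorem reflTransGen_of_paths_meet {i q j c : V} {P S : List V} (hi : i ∈ VI) (hc : c ∈ VI)
    (hic : i ≠ c) (hP : IsPathList E i q P) (hPI : ∀ x ∈ P, x ≠ i → x ∉ VI)
    (hS : IsPathList E j c S) (hSI : ∀ x ∈ S, x ≠ c → x ∉ VI) (hvP : v ∈ P) (hvS : v ∈ S) :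
    Relation.ReflTransGen (inducedRel E (· ∉ VI)) j q := by
  have hvi : v ≠ i := by rintro rfl; exact hSI v hvS hic hi
  have hvc : v ≠ c := by rintro rfl; exact hPI v hvP hic.symm hc
  exact (hS.reflTransGen_inducedRel_to_mem hvS hvc hSI).trans
    (hP.reflTransGen_inducedRel_from_mem hvP hvi hPI)

end IPaths

end ICPaper

theorem path_to_q_and_noninner_cycle_general {V : Type*}
    (E : V → V → Prop) (VI : Set V)
    (i : V)
    (j : V) (hj : j ∈ VNI E VI i)
    (p : V) (hpu : ∀ v, treeEdge E VI i v j → v = p)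
    (q : V) (hq : q ∈ VNI E VI i) (hqp : q ≠ p) (hqj : E q j) :
    (∃ l, IsPathList E j q l) ∧
    (∃ l, IsCycle E l ∧ (∀ v ∈ l, v ∉ VI) ∧ j ∈ l ∧ q ∈ l) := by
  obtain ⟨⟨c, lj, hlj, hjlj⟩, hjI⟩ := hj
  obtain ⟨⟨b, lq, hlq, hqlq⟩, hqI⟩ := hq
  obtain ⟨P, hP, hPI⟩ := hlq.exists_path_to hqlq hqI
  obtain ⟨S, hS, hSI⟩ := hlj.exists_path_from hjlj hjI
  obtain ⟨hi, hc, hic, -⟩ := hlj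
  obtain ⟨v, hvP, hvS⟩ : ∃ v, v ∈ P ∧ v ∈ S := by
    by_contra! hdisj
    exact hqp (hpu q (treeEdge_of_disjoint_paths hi hc hic hP hPI hS hSI hqj hdisj))
  obtain ⟨l, hl, hlI⟩ := exists_isPathList_of_reflTransGen_inducedRel
    (reflTransGen_of_paths_meet hi hc hic hP hPI hS hSI hvP hvS) hjI
  exact ⟨⟨l, hl⟩, l, hl.isCycle hqj, hlI, hl.head_mem, hl.getLast_mem⟩

/-- **Claim (Theorem 2, Part 1).** In a `K`-IC structure, let `i` be an inner vertex and
`j ∈ V_NI(i) \ N^+_{T i}(i)` a non-inner vertex at depth `≥ 2` in `T i`, with unique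
in-neighbour `p` in `T i`. If `q ∈ V_NI(i)`, `q ≠ p`, and `(q, j) ∈ E`, then there is a
directed path in `G` from `j` to `q`; consequently `G` contains a cycle consisting only of
non-inner vertices passing through `j` and `q`. -/
theorem path_to_q_and_noninner_cycle {V : Type*} [Fintype V] [DecidableEq V]
    (E : V → V → Prop) (VI : Set V) (K : ℕ) (hIC : IsICStructure E VI K)
    (i : V) (hi : i ∈ VI)
    (j : V) (hj : j ∈ VNI E VI i) (hjd : j ∉ NplusT E VI i)
    (p : V) (hp : treeEdge E VI i p j) (hpu : ∀ v, treeEdge E VI i v j → v = p)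
    (q : V) (hq : q ∈ VNI E VI i) (hqp : q ≠ p) (hqj : E q j) :
    (∃ l, IsPathList E j q l) ∧
    (∃ l, IsCycle E l ∧ (∀ v ∈ l, v ∉ VI) ∧ j ∈ l ∧ q ∈ l) :=
  path_to_q_and_noninner_cycle_general E VI i j hj p hpu q hq hqp hqj
end

section
/- Let G be a K-IC structure with inner vertex set V_I, let i be an inner vertex and let j ∈ V(G) \ V(T_i) be a vertex not in the rooted tree T_i. Then in the combination Z_i = W_I ⊕ (⊕_{v ∈ V_NI(i)} W_v) of Construction-1 index code symbols over a field F of characteristic 2, the message x_j appears exactly b_{i,j} times (it appears neither in W_I nor as the leading term of any W_v with v ∈ V_NI(i)); hence the coefficient of x_j in Z_i is 0 if b_{i,j} = 0 and 1 if b_{i,j} = 1. (Intermediate claim in the proof of Theorem 1) -/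
open ICPaper

/-! Every inner vertex lies on the tree `T i`, so a vertex `j` outside `T i` is non-inner and
not in `V_NI(i)`. Hence `x_j` enters `Z_i` only as an out-neighbour term of some `W_v`,
`v ∈ V_NI(i)`: evaluating `Z_i` at the unit message `x = e_j` counts these `v`, giving
`b_{i,j}`. -/

section Finsum

variable {α M : Type*}

theorem finsum_mem_one_eq_ncard [AddCommMonoidWithOne M] (s : Set α) :
    ∑ᶠ _ ∈ s, (1 : M) = s.ncard := by
  obtain hs | hs := s.finite_or_infinite
  · rw [← finsum_one, Nat.cast_finsum_mem hs, Nat.cast_one]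
  · rw [hs.ncard, Nat.cast_zero]
    by_cases h1 : (1 : M) = 0
    · simp [h1]
    · exact finsum_mem_eq_zero_of_infinite (by simpa [Function.support_const h1] using hs)

theorem finsum_mem_indicator [AddCommMonoid M] (s t : Set α) (f : α → M) :
    ∑ᶠ a ∈ s, t.indicator f a = ∑ᶠ a ∈ s ∩ t, f a := by
  rw [finsum_mem_def, finsum_mem_def, Set.indicator_indicator]

theorem finsum_mem_pi_single_s14 [DecidableEq α] [AddCommMonoid M] (s : Set α) (j : α) (c : M) :
    ∑ᶠ a ∈ s, Pi.single j c a = s.indicator (fun _ => c) j := by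
  rw [finsum_mem_def, finsum_eq_single _ j]
  · by_cases hj : j ∈ s <;> simp [hj]
  · intro a ha
    simp [ha]

end Finsum

namespace ICPaper

variable {V : Type*} {E : V → V → Prop} {VI : Set V} {K : ℕ} {i j : V}

theorem IsIPath.head_mem {a b : V} {l : List V} (h : IsIPath E VI a b l) : a ∈ l :=
  List.mem_of_mem_head? h.2.2.2.1.2.1

theorem IsIPath.last_mem {a b : V} {l : List V} (h : IsIPath E VI a b l) : b ∈ l :=
  List.mem_of_getLast? h.2.2.2.1.2.2.1

theorem IsICStructure.mem_treeVerts_self (hIC : IsICStructure E VI K) (hi : i ∈ VI) :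
    i ∈ treeVerts E VI i := by
  obtain ⟨-, -, hpath, hcover, -⟩ := hIC
  obtain ⟨a, b, l, hl, hil⟩ := hcover i
  have ⟨ha, _, hab, _, hinner⟩ := hl
  by_cases hia : i = a
  · exact ⟨b, l, hia ▸ hl, hil⟩
  · -- `i` is inner, so it can only be an endpoint of the I-path `l`.
    have hib : i = b := by_contra fun hib => hinner i hil hia hib hi
    subst hib
    obtain ⟨l', hl', -⟩ := hpath i hi a ha (Ne.symm hab)
    exact ⟨a, l', hl', hl'.head_mem⟩

theorem IsICStructure.subset_treeVerts (hIC : IsICStructure E VI K) (hi : i ∈ VI) :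
    VI ⊆ treeVerts E VI i := by
  intro k hk
  by_cases hki : k = i
  · rw [hki]
    exact hIC.mem_treeVerts_self hi
  · obtain ⟨l, hl, -⟩ := hIC.2.2.1 i hi k hk (Ne.symm hki)
    exact ⟨k, l, hl, hl.last_mem⟩

section UnitMessage

variable {F : Type*} [DecidableEq V]

theorem WI_single_of_notMem [AddCommMonoid F] (c : F) (hj : j ∉ VI) :
    WI VI (Pi.single j c) = 0 := by
  rw [WI, finsum_mem_pi_single_s14, Set.indicator_of_notMem hj]

theorem Wsym_single_of_ne [AddCommMonoid F] (c : F) {v : V} (hv : v ≠ j) :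
    Wsym E (Pi.single j c) v = {v | E v j}.indicator (fun _ => c) v := by
  rw [Wsym, Pi.single_eq_of_ne hv, zero_add, finsum_mem_pi_single_s14]
  rfl

theorem Z_single_of_notMem [AddCommMonoidWithOne F] (hjI : j ∉ VI) (hjN : j ∉ VNI E VI i) :
    Z E VI (Pi.single j (1 : F)) i = coeffCount E VI i j := by
  rw [Z, WI_single_of_notMem _ hjI, zero_add,
    finsum_mem_congr rfl fun v hv => Wsym_single_of_ne _ (ne_of_mem_of_not_mem hv hjN),
    finsum_mem_indicator, finsum_mem_one_eq_ncard]
  rfl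

end UnitMessage

end ICPaper

theorem outside_message_occurrences_general {V : Type*} [DecidableEq V]
    (F : Type*) [Field F]
    (E : V → V → Prop) (VI : Set V) (K : ℕ) (hIC : IsICStructure E VI K)
    (i : V) (hi : i ∈ VI) (j : V) (hj : j ∉ treeVerts E VI i) :
    j ∉ VI ∧
    {v | v ∈ VNI E VI i ∧ (v = j ∨ E v j)}.ncard = coeffCount E VI i j ∧
    (coeffCount E VI i j = 0 → Z E VI (Pi.single j (1 : F)) i = 0) ∧
    (coeffCount E VI i j = 1 → Z E VI (Pi.single j (1 : F)) i = 1) := by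
  have hjI : j ∉ VI := fun h => hj (hIC.subset_treeVerts hi h)
  have hjN : j ∉ VNI E VI i := fun h => hj h.1
  have hZ : Z E VI (Pi.single j (1 : F)) i = coeffCount E VI i j := Z_single_of_notMem hjI hjN
  refine ⟨hjI, ?_, fun h => by rw [hZ, h, Nat.cast_zero], fun h => by rw [hZ, h, Nat.cast_one]⟩
  congr 1
  ext v
  exact and_congr_right fun hv => or_iff_right (by rintro rfl; exact hjN hv)

/-- **Intermediate claim in the proof of Theorem 1.** For an inner vertex `i` and a vertex
`j` not in the rooted tree `T i`, the message `x_j` appears exactly `b_{i,j}` times among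
the symbols combined in `Z_i` (it appears neither in `W_I` nor as the leading term of any
`W_v` with `v ∈ V_NI(i)`); hence its coefficient in `Z_i` is `0` if `b_{i,j} = 0` and `1`
if `b_{i,j} = 1`. -/
theorem outside_message_occurrences {V : Type*} [Fintype V] [DecidableEq V]
    (F : Type*) [Field F] [Fintype F] [CharP F 2]
    (E : V → V → Prop) (VI : Set V) (K : ℕ) (hIC : IsICStructure E VI K)
    (i : V) (hi : i ∈ VI) (j : V) (hj : j ∉ treeVerts E VI i) :
    j ∉ VI ∧
    {v | v ∈ VNI E VI i ∧ (v = j ∨ E v j)}.ncard = coeffCount E VI i j ∧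
    (coeffCount E VI i j = 0 → Z E VI (Pi.single j (1 : F)) i = 0) ∧
    (coeffCount E VI i j = 1 → Z E VI (Pi.single j (1 : F)) i = 1) :=
  outside_message_occurrences_general F E VI K hIC i hi j hj
end
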